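/- arXiv:1809.06210 — 2 statements merged into one kernel-verified Lean document; each statement's English description precedes it below -/
import Mathlib

section
/- Let A be a pseudo-hoop, F a filter of A, and X ⊆ A. Then ν_F(ν_F(X)⟶X) and ν_F(ν_F(X)⟿X) are filters of A, where ν_F(X)⟶X := {a→x : a ∈ ν_F(X), x ∈ X} and ν_F(X)⟿X := {a⇝x : a ∈ ν_F(X), x ∈ X}. -/
/-- A pseudo-hoop: an algebra `(A; ·, →, ⇝, 1)` satisfying the pseudo-hoop
axioms; the induced relation `x ≤ y ↔ x → y = 1` is a partial order. -/
class PseudoHoop (A : Type*) extends Mul A, One A, PartialOrder A where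
  arr : A → A → A
  sarr : A → A → A
  mul_one' : ∀ x : A, x * 1 = x
  one_mul' : ∀ x : A, 1 * x = x
  arr_self : ∀ x : A, arr x x = 1
  sarr_self : ∀ x : A, sarr x x = 1
  arr_mul : ∀ x y z : A, arr (x * y) z = arr x (arr y z)
  sarr_mul : ∀ x y z : A, sarr (x * y) z = sarr y (sarr x z)
  div₁ : ∀ x y : A, (arr x y) * x = (arr y x) * y
  div₂ : ∀ x y : A, (arr x y) * x = x * (sarr x y)
  div₃ : ∀ x y : A, x * (sarr x y) = y * (sarr y x)
  le_iff_arr : ∀ x y : A, x ≤ y ↔ arr x y = 1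

namespace PseudoHoop

variable {A : Type*} [PseudoHoop A]

/-- The meet `x ∧ y = (x → y) · x` of a pseudo-hoop. -/
def pinf (x y : A) : A := (arr x y) * x

/-- A filter of a pseudo-hoop: an upper set containing `1` that is closed
under multiplication. -/
def PHFilter (F : Set A) : Prop :=
  IsUpperSet F ∧ (1 : A) ∈ F ∧ ∀ x ∈ F, ∀ y ∈ F, x * y ∈ F

/-- The polar `M^⊥ = {x | x ∨ y = 1 for all y ∈ M}`, where `x ∨ y = 1` means
that `1` is the least upper bound of `{x, y}`. -/
def polar (M : Set A) : Set A := {x : A | ∀ y ∈ M, IsLUB {x, y} (1 : A)}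

/-- `ν_F(X)`: the upper bounds of `X` lying in `F`. -/
def nuF (F X : Set A) : Set A := {a : A | a ∈ F ∧ ∀ x ∈ X, x ≤ a}

/-- Elementwise implication `Y ⟶ X = {a → x | a ∈ Y, x ∈ X}`. -/
def setArr (Y X : Set A) : Set A := {c : A | ∃ a ∈ Y, ∃ x ∈ X, c = arr a x}

/-- Elementwise implication `Y ⟿ X = {a ⇝ x | a ∈ Y, x ∈ X}`. -/
def setSarr (Y X : Set A) : Set A := {c : A | ∃ a ∈ Y, ∃ x ∈ X, c = sarr a x}

end PseudoHoop

open PseudoHoop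

section Aux

variable {A : Type*} [PseudoHoop A]

lemma ph_le_arr_iff {x y z : A} : x ≤ arr y z ↔ x * y ≤ z := by
  rw [le_iff_arr, le_iff_arr, arr_mul]

lemma ph_le_iff_sarr (x y : A) : x ≤ y ↔ sarr x y = 1 := by
  constructor
  · intro h
    have h1 : arr x y = 1 := (le_iff_arr x y).mp h
    have hx : x * sarr x y = x := by
      have h2 := div₂ x y
      rw [h1, one_mul'] at h2
      exact h2.symm
    have : sarr (x * sarr x y) y = 1 := by rw [sarr_mul, sarr_self]
    rwa [hx] at this
  · intro h
    have hx : arr x y * x = x := by rw [div₂, h, mul_one']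
    have h1 : arr (arr x y * x) y = 1 := by rw [arr_mul, arr_self]
    rw [hx] at h1
    exact (le_iff_arr x y).mpr h1

lemma ph_le_sarr_iff {x y z : A} : y ≤ sarr x z ↔ x * y ≤ z := by
  rw [ph_le_iff_sarr, ph_le_iff_sarr, sarr_mul]

lemma ph_mul_le_mul_left {s b : A} (h : s ≤ b) (u : A) : s * u ≤ b * u :=
  ph_le_arr_iff.mp (h.trans (ph_le_arr_iff.mpr le_rfl))

lemma ph_mul_le_mul_right {s b : A} (h : s ≤ b) (u : A) : u * s ≤ u * b :=
  ph_le_sarr_iff.mp (h.trans (ph_le_sarr_iff.mpr le_rfl))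

lemma ph_arr_mul_of_le {x u : A} (h : x ≤ u) : arr u x * u = x := by
  rw [div₁, (le_iff_arr x u).mp h, one_mul']

lemma ph_mul_sarr_of_le {x u : A} (h : x ≤ u) : u * sarr u x = x := by
  rw [← div₃, (ph_le_iff_sarr x u).mp h, mul_one']

lemma ph_arr_le_one {x u : A} (h : x ≤ u) : arr u x ≤ 1 := by
  rw [le_iff_arr]
  calc arr (arr u x) 1 = arr (arr u x) (arr u u) := by rw [arr_self]
    _ = arr (arr u x * u) u := (arr_mul _ _ _).symm
    _ = arr x u := by rw [ph_arr_mul_of_le h]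
    _ = 1 := (le_iff_arr x u).mp h

lemma ph_sarr_le_one {x u : A} (h : x ≤ u) : sarr u x ≤ 1 := by
  rw [ph_le_iff_sarr]
  calc sarr (sarr u x) 1 = sarr (sarr u x) (sarr u u) := by rw [sarr_self]
    _ = sarr (u * sarr u x) u := (sarr_mul _ _ _).symm
    _ = sarr x u := by rw [ph_mul_sarr_of_le h]
    _ = 1 := (ph_le_iff_sarr x u).mp h

end Aux

/-- For a filter `F` and `X ⊆ A`, the sets `ν_F(ν_F(X) ⟶ X)` and
`ν_F(ν_F(X) ⟿ X)` are filters. -/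
theorem nuF_setArr_filter {A : Type*} [PseudoHoop A] (F X : Set A)
    (hF : PHFilter F) :
    PHFilter (nuF F (setArr (nuF F X) X)) ∧
    PHFilter (nuF F (setSarr (nuF F X) X)) := by
  obtain ⟨hup, h1F, hmul⟩ := hF
  constructor
  · refine ⟨?_, ⟨h1F, ?_⟩, ?_⟩
    · intro p q hpq hp
      exact ⟨hup hpq hp.1, fun c hc => (hp.2 c hc).trans hpq⟩
    · rintro c ⟨u, hu, x, hx, rfl⟩
      exact ph_arr_le_one (hu.2 x hx)
    · rintro a ⟨haF, ha⟩ b ⟨hbF, hb⟩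
      refine ⟨hmul a haF b hbF, ?_⟩
      rintro c ⟨u, hu, x, hx, rfl⟩
      have htb : arr u x ≤ b := hb _ ⟨u, hu, x, hx, rfl⟩
      have hbu : b * u ∈ nuF F X := by
        refine ⟨hmul b hbF u hu.1, fun y hy => ?_⟩
        calc y = arr u y * u := (ph_arr_mul_of_le (hu.2 y hy)).symm
          _ ≤ b * u := ph_mul_le_mul_left (hb _ ⟨u, hu, y, hy, rfl⟩) u
      have hba : arr b (arr u x) ≤ a := by
        have := ha _ ⟨b * u, hbu, x, hx, rfl⟩
        rwa [arr_mul] at this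
      calc arr u x = 1 * arr u x := (one_mul' _).symm
        _ = arr (arr u x) b * arr u x := by rw [(le_iff_arr _ b).mp htb]
        _ = arr b (arr u x) * b := (div₁ _ _).symm
        _ ≤ a * b := ph_mul_le_mul_left hba b
  · refine ⟨?_, ⟨h1F, ?_⟩, ?_⟩
    · intro p q hpq hp
      exact ⟨hup hpq hp.1, fun c hc => (hp.2 c hc).trans hpq⟩
    · rintro c ⟨u, hu, x, hx, rfl⟩
      exact ph_sarr_le_one (hu.2 x hx)
    · rintro a ⟨haF, ha⟩ b ⟨hbF, hb⟩
      refine ⟨hmul a haF b hbF, ?_⟩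
      rintro c ⟨u, hu, x, hx, rfl⟩
      have hta : sarr u x ≤ a := ha _ ⟨u, hu, x, hx, rfl⟩
      have hua : u * a ∈ nuF F X := by
        refine ⟨hmul u hu.1 a haF, fun y hy => ?_⟩
        calc y = u * sarr u y := (ph_mul_sarr_of_le (hu.2 y hy)).symm
          _ ≤ u * a := ph_mul_le_mul_right (ha _ ⟨u, hu, y, hy, rfl⟩) u
      have hab : sarr a (sarr u x) ≤ b := by
        have := hb _ ⟨u * a, hua, x, hx, rfl⟩
        rwa [sarr_mul] at this
      calc sarr u x = sarr u x * 1 := (mul_one' _).symm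
        _ = sarr u x * sarr (sarr u x) a := by rw [(ph_le_iff_sarr _ a).mp hta]
        _ = a * sarr a (sarr u x) := (div₃ _ _).symm
        _ ≤ a * b := ph_mul_le_mul_right hab a
end

section
/- Let A be an integral residuated ∨-semilattice. Then: (1) A is a →-MTL-algebra if and only if the →-prime filters of A are exactly the ∨-prime filters of A; (2) A is a ⇝-MTL-algebra if and only if the ⇝-prime filters of A are exactly the ∨-prime filters of A; (3) A is a pseudo MTL-algebra if and only if the prime filters of A are exactly the ∨-prime filters of A. -/
/-- A residuated `∨`-semilattice: a join-semilattice with an associative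
multiplication and two residuals. -/
class ResiduatedSupSemilattice (A : Type*) extends SemilatticeSup A, Mul A where
  mul_assoc' : ∀ x y z : A, x * y * z = x * (y * z)
  arr : A → A → A
  sarr : A → A → A
  res_arr : ∀ x y z : A, x * y ≤ z ↔ x ≤ arr y z
  res_sarr : ∀ x y z : A, x * y ≤ z ↔ y ≤ sarr x z

namespace ResiduatedSupSemilattice

variable {A : Type*} [ResiduatedSupSemilattice A]

/-- A filter: a non-empty upper set closed under multiplication. -/
def RFilter (F : Set A) : Prop :=
  F.Nonempty ∧ IsUpperSet F ∧ ∀ x ∈ F, ∀ y ∈ F, x * y ∈ F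

/-- A `→`-prime filter. -/
def ArrPrime (F : Set A) : Prop := ∀ x y : A, arr x y ∈ F ∨ arr y x ∈ F

/-- A `⇝`-prime filter. -/
def SarrPrime (F : Set A) : Prop := ∀ x y : A, sarr x y ∈ F ∨ sarr y x ∈ F

/-- A prime filter: both `→`-prime and `⇝`-prime. -/
def PrimeF (F : Set A) : Prop := ArrPrime F ∧ SarrPrime F

/-- A `∨`-prime filter. -/
def JoinPrime (F : Set A) : Prop := ∀ x y : A, x ⊔ y ∈ F → x ∈ F ∨ y ∈ F

end ResiduatedSupSemilattice

/-- An integral residuated `∨`-semilattice: the multiplicative unit `1` is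
the greatest element. -/
class IntegralResiduatedSupSemilattice (A : Type*) extends
    ResiduatedSupSemilattice A, One A where
  mul_one' : ∀ x : A, x * 1 = x
  one_mul' : ∀ x : A, 1 * x = x
  le_one : ∀ x : A, x ≤ 1

open ResiduatedSupSemilattice

section Aux

variable {A : Type*} [IntegralResiduatedSupSemilattice A]

private lemma leOne (x : A) : x ≤ 1 := IntegralResiduatedSupSemilattice.le_one x

private lemma mulLeMulLeft {a b : A} (c : A) (h : a ≤ b) : c * a ≤ c * b :=
  (res_sarr c a (c * b)).mpr (h.trans ((res_sarr c b (c * b)).mp le_rfl))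

private lemma mulLeMulRight {a b : A} (c : A) (h : a ≤ b) : a * c ≤ b * c :=
  (res_arr a c (b * c)).mpr (h.trans ((res_arr b c (b * c)).mp le_rfl))

private lemma mulLeLeft (a b : A) : a * b ≤ a := by
  have h := mulLeMulLeft a (leOne b)
  rwa [IntegralResiduatedSupSemilattice.mul_one'] at h

private lemma mulLeRight (a b : A) : a * b ≤ b := by
  have h := mulLeMulRight b (leOne a)
  rwa [IntegralResiduatedSupSemilattice.one_mul'] at h

private lemma supMulLe (u u' v : A) : (u ⊔ v) * (u' ⊔ v) ≤ u * u' ⊔ v := by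
  rw [res_arr]
  apply sup_le
  · rw [← res_arr, res_sarr]
    apply sup_le
    · rw [← res_sarr]; exact le_sup_left
    · rw [← res_sarr]; exact (mulLeRight u v).trans le_sup_right
  · rw [← res_arr]; exact (mulLeLeft v (u' ⊔ v)).trans le_sup_right

private lemma oneMem {F : Set A} (hF : RFilter F) : (1 : A) ∈ F := by
  obtain ⟨a, ha⟩ := hF.1
  exact hF.2.1 (leOne a) ha

/-- `→`-prime filters are `∨`-prime (no prelinearity needed). -/
private lemma arrPrime_joinPrime {F : Set A} (hF : RFilter F) (h : ArrPrime F) :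
    JoinPrime F := by
  intro x y hxy
  rcases h x y with hd | hd
  · right
    refine hF.2.1 ?_ (hF.2.2 _ hd _ hxy)
    rw [res_sarr]
    apply sup_le
    · rw [← res_sarr]; exact (res_arr (arr x y) x y).mpr le_rfl
    · rw [← res_sarr]; exact mulLeRight _ _
  · left
    refine hF.2.1 ?_ (hF.2.2 _ hd _ hxy)
    rw [res_sarr]
    apply sup_le
    · rw [← res_sarr]; exact mulLeRight _ _
    · rw [← res_sarr]; exact (res_arr (arr y x) y x).mpr le_rfl

/-- `⇝`-prime filters are `∨`-prime (no prelinearity needed). -/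
private lemma sarrPrime_joinPrime {F : Set A} (hF : RFilter F) (h : SarrPrime F) :
    JoinPrime F := by
  intro x y hxy
  rcases h x y with hd | hd
  · right
    refine hF.2.1 ?_ (hF.2.2 _ hxy _ hd)
    rw [res_arr]
    apply sup_le
    · rw [← res_arr]; exact (res_sarr x (sarr x y) y).mpr le_rfl
    · rw [← res_arr]; exact mulLeLeft _ _
  · left
    refine hF.2.1 ?_ (hF.2.2 _ hxy _ hd)
    rw [res_arr]
    apply sup_le
    · rw [← res_arr]; exact mulLeLeft _ _
    · rw [← res_arr]; exact (res_sarr y (sarr y x) x).mpr le_rfl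

/-- Elements of the submonoid generated by `F ∪ {x}`. -/
private inductive Gen (F : Set A) (x : A) : A → Prop
  | base {a : A} (ha : a ∈ F) : Gen F x a
  | elt : Gen F x x
  | mul {a b : A} : Gen F x a → Gen F x b → Gen F x (a * b)

private lemma gen_sup_mem {F : Set A} (hF : RFilter F) {x y : A} (hxy : x ⊔ y ∈ F) :
    ∀ {u}, Gen F x u → ∀ {v}, Gen F y v → u ⊔ v ∈ F := by
  intro u hu
  induction hu with
  | base ha => intro v _; exact hF.2.1 le_sup_left ha
  | elt =>
    intro v hv
    induction hv with
    | base hb => exact hF.2.1 le_sup_right hb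
    | elt => exact hxy
    | @mul a b _ _ ih1 ih2 =>
      have key : (a ⊔ x) * (b ⊔ x) ≤ a * b ⊔ x := supMulLe a b x
      have h1 : (a ⊔ x) * (b ⊔ x) ∈ F := by
        apply hF.2.2
        · rwa [sup_comm a x]
        · rwa [sup_comm b x]
      rw [sup_comm x (a * b)]
      exact hF.2.1 key h1
  | @mul a b _ _ ih1 ih2 =>
    intro v hv
    exact hF.2.1 (supMulLe a b v) (hF.2.2 _ (ih1 hv) _ (ih2 hv))

/-- The filter generated by `F ∪ {x}`. -/
private def genFilter (F : Set A) (x : A) : Set A := {a | ∃ u, Gen F x u ∧ u ≤ a}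

private lemma rfilter_genFilter {F : Set A} (_hF : RFilter F) (x : A) :
    RFilter (genFilter F x) := by
  refine ⟨⟨x, x, Gen.elt, le_rfl⟩, ?_, ?_⟩
  · intro a b hab ha
    obtain ⟨u, hu, hua⟩ := ha
    exact ⟨u, hu, hua.trans hab⟩
  · rintro a ⟨u, hu, hua⟩ b ⟨v, hv, hvb⟩
    exact ⟨u * v, Gen.mul hu hv, (mulLeMulRight v hua).trans (mulLeMulLeft a hvb)⟩

private lemma subset_genFilter (F : Set A) (x : A) : F ⊆ genFilter F x :=
  fun a ha => ⟨a, Gen.base ha, le_rfl⟩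

private lemma mem_genFilter (F : Set A) (x : A) : x ∈ genFilter F x :=
  ⟨x, Gen.elt, le_rfl⟩

/-- For every `c ≠ 1` there is a `∨`-prime filter avoiding `c`. -/
private lemma exists_joinPrime (c : A) (hc : c ≠ 1) :
    ∃ F : Set A, RFilter F ∧ JoinPrime F ∧ c ∉ F := by
  have hbase : Set.Ici (1 : A) ∈ {F : Set A | RFilter F ∧ c ∉ F} := by
    constructor
    · refine ⟨⟨1, le_rfl⟩, fun a b hab ha => le_trans ha hab, ?_⟩
      intro a ha b hb
      have : (1 : A) * 1 ≤ a * b := (mulLeMulRight 1 ha).trans (mulLeMulLeft a hb)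
      rwa [IntegralResiduatedSupSemilattice.mul_one'] at this
    · intro h
      exact hc (le_antisymm (leOne c) h)
  obtain ⟨M, _, hM⟩ := zorn_subset_nonempty {F : Set A | RFilter F ∧ c ∉ F}
    (fun ch hchS hchain hne => by
      refine ⟨⋃₀ ch, ⟨⟨?_, ?_, ?_⟩, ?_⟩, fun s hs => Set.subset_sUnion_of_mem hs⟩
      · obtain ⟨s, hs⟩ := hne
        obtain ⟨a, ha⟩ := (hchS hs).1.1
        exact ⟨a, s, hs, ha⟩
      · rintro a b hab ⟨s, hs, has⟩
        exact ⟨s, hs, (hchS hs).1.2.1 hab has⟩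
      · rintro a ⟨s, hs, has⟩ b ⟨t, ht, hbt⟩
        rcases hchain.total hs ht with hst | hts
        · exact ⟨t, ht, (hchS ht).1.2.2 _ (hst has) _ hbt⟩
        · exact ⟨s, hs, (hchS hs).1.2.2 _ has _ (hts hbt)⟩
      · rintro ⟨s, hs, hcs⟩
        exact (hchS hs).2 hcs)
    (Set.Ici 1) hbase
  have hMF : RFilter M := hM.prop.1
  have hMc : c ∉ M := hM.prop.2
  refine ⟨M, hMF, ?_, hMc⟩
  intro x y hxy
  by_contra hcon
  push_neg at hcon
  obtain ⟨hx, hy⟩ := hcon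
  -- the extensions by x and by y both contain c
  have hcx : c ∈ genFilter M x := by
    by_contra hcx
    have : genFilter M x ⊆ M :=
      hM.2 ⟨rfilter_genFilter hMF x, hcx⟩ (subset_genFilter M x)
    exact hx (this (mem_genFilter M x))
  have hcy : c ∈ genFilter M y := by
    by_contra hcy
    have : genFilter M y ⊆ M :=
      hM.2 ⟨rfilter_genFilter hMF y, hcy⟩ (subset_genFilter M y)
    exact hy (this (mem_genFilter M y))
  obtain ⟨u, hu, huc⟩ := hcx
  obtain ⟨v, hv, hvc⟩ := hcy
  exact hMc (hMF.2.1 (sup_le huc hvc) (gen_sup_mem hMF hxy hu hv))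

private lemma arr_prelin_of
    (h : ∀ F : Set A, RFilter F → JoinPrime F → ArrPrime F) :
    ∀ x y : A, arr x y ⊔ arr y x = 1 := by
  intro x y
  by_contra hc
  obtain ⟨F, hF, hJ, hcF⟩ := exists_joinPrime (arr x y ⊔ arr y x) hc
  rcases h F hF hJ x y with h1 | h1
  · exact hcF (hF.2.1 le_sup_left h1)
  · exact hcF (hF.2.1 le_sup_right h1)

private lemma sarr_prelin_of
    (h : ∀ F : Set A, RFilter F → JoinPrime F → SarrPrime F) :
    ∀ x y : A, sarr x y ⊔ sarr y x = 1 := by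
  intro x y
  by_contra hc
  obtain ⟨F, hF, hJ, hcF⟩ := exists_joinPrime (sarr x y ⊔ sarr y x) hc
  rcases h F hF hJ x y with h1 | h1
  · exact hcF (hF.2.1 le_sup_left h1)
  · exact hcF (hF.2.1 le_sup_right h1)

end Aux

/-- An integral residuated `∨`-semilattice is a `→`-MTL-algebra (resp.
`⇝`-MTL-algebra, pseudo MTL-algebra) iff its `→`-prime (resp. `⇝`-prime,
prime) filters are exactly its `∨`-prime filters. -/
theorem mtl_iff_prime_eq_sup_prime {A : Type*}
    [IntegralResiduatedSupSemilattice A] :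
    ((∀ x y : A, arr x y ⊔ arr y x = 1) ↔
      (∀ F : Set A, RFilter F → (ArrPrime F ↔ JoinPrime F))) ∧
    ((∀ x y : A, sarr x y ⊔ sarr y x = 1) ↔
      (∀ F : Set A, RFilter F → (SarrPrime F ↔ JoinPrime F))) ∧
    (((∀ x y : A, arr x y ⊔ arr y x = 1) ∧ (∀ x y : A, sarr x y ⊔ sarr y x = 1)) ↔
      (∀ F : Set A, RFilter F → (PrimeF F ↔ JoinPrime F))) := by
  refine ⟨⟨?_, ?_⟩, ⟨?_, ?_⟩, ⟨?_, ?_⟩⟩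
  · intro hmtl F hF
    refine ⟨arrPrime_joinPrime hF, fun hJ x y => hJ _ _ ?_⟩
    rw [hmtl x y]; exact oneMem hF
  · intro h
    exact arr_prelin_of (fun F hF hJ => (h F hF).mpr hJ)
  · intro hmtl F hF
    refine ⟨sarrPrime_joinPrime hF, fun hJ x y => hJ _ _ ?_⟩
    rw [hmtl x y]; exact oneMem hF
  · intro h
    exact sarr_prelin_of (fun F hF hJ => (h F hF).mpr hJ)
  · rintro ⟨h1, h2⟩ F hF
    refine ⟨fun hP => arrPrime_joinPrime hF hP.1, fun hJ => ⟨?_, ?_⟩⟩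
    · intro x y; apply hJ; rw [h1 x y]; exact oneMem hF
    · intro x y; apply hJ; rw [h2 x y]; exact oneMem hF
  · intro h
    exact ⟨arr_prelin_of (fun F hF hJ => ((h F hF).mpr hJ).1),
           sarr_prelin_of (fun F hF hJ => ((h F hF).mpr hJ).2)⟩
end
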